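/- arXiv:2603.00014 — 5 statements merged into one kernel-verified Lean document; each statement's English description precedes it below -/
import Mathlib

section
/- Let x_1 ∈ Q and for k = 1, …, N let x_{k+1} be a minimizer over Q of x ↦ ⟨g_k, x⟩ + (1/γ_k) V_ψ(x, x_k), where g_k is a subgradient of f at x_k and γ_k = 2/(μ(k+1)). Let x* be a minimizer of f over Q and set x̂ = (2/(N(N+1))) Σ_{k=1}^N k·x_k. Then ‖x̂ − x*‖ ≤ (2/(μ √(N(N+1)))) · √( Σ_{k=1}^N (k/(k+1)) ‖g_k‖_*² ). -/
open Finset Real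

noncomputable def breg {E : Type*} [NormedAddCommGroup E] [NormedSpace ℝ E]
    (ψ : E → ℝ) (ψ' : E → E →L[ℝ] ℝ) (x y : E) : ℝ :=
  ψ x - ψ y - ψ' y (x - y)

private lemma var_ineq {E : Type*} [NormedAddCommGroup E] [NormedSpace ℝ E]
    (Q : Set E) (hQconv : Convex ℝ Q)
    (ψ : E → ℝ) (ψ' : E → E →L[ℝ] ℝ)
    (hψdiff : ∀ x ∈ Q, HasFDerivWithinAt ψ (ψ' x) Q x)
    (g : E →L[ℝ] ℝ) (c : ℝ) (x0 xp : E) (hxp : xp ∈ Q)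
    (hmin : ∀ y ∈ Q, g xp + c * breg ψ ψ' xp x0 ≤ g y + c * breg ψ ψ' y x0)
    (y : E) (hy : y ∈ Q) :
    0 ≤ g (y - xp) + c * ((ψ' xp) (y - xp) - (ψ' x0) (y - xp)) := by
  have h1 : HasFDerivWithinAt (fun z => ψ z - ψ x0 - ψ' x0 (z - x0))
      (ψ' xp - ψ' x0) Q xp := by
    have h2 : HasFDerivWithinAt (fun z : E => (ψ' x0) (z - x0)) (ψ' x0) Q xp := by
      simp only [map_sub]
      exact ((ψ' x0).hasFDerivAt.sub_const _).hasFDerivWithinAt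
    exact ((hψdiff xp hxp).sub_const _).sub h2
  have hF : HasFDerivWithinAt (fun z => g z + c * breg ψ ψ' z x0)
      (g + c • (ψ' xp - ψ' x0)) Q xp := by
    simp only [breg]
    exact g.hasFDerivWithinAt.add (h1.const_smul c)
  have hminon : IsMinOn (fun z => g z + c * breg ψ ψ' z x0) Q xp := fun z hz => hmin z hz
  have hcone : y - xp ∈ posTangentConeAt Q xp :=
    sub_mem_posTangentConeAt_of_segment_subset (hQconv.segment_subset hxp hy)
  have := hminon.localize.hasFDerivWithinAt_nonneg hF hcone
  simpa [smul_eq_mul, mul_sub] using this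

private lemma gauss_sum_real (n : ℕ) :
    ∑ k ∈ Finset.Icc 1 n, (k : ℝ) = n * (n + 1) / 2 := by
  induction n with
  | zero => simp
  | succ m ih =>
    rw [Finset.sum_Icc_succ_top (by omega)]
    push_cast
    rw [ih]; ring

private lemma tele_sum (D : ℕ → ℝ) (n : ℕ) :
    ∑ k ∈ Finset.Icc 1 n, (D (k + 1) - D k) = D (n + 1) - D 1 := by
  induction n with
  | zero => simp
  | succ m ih =>
    rw [Finset.sum_Icc_succ_top (by omega), ih]; ring

private lemma step_arith (μ K c G d U Vk Vp W a b : ℝ)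
    (hμ : 0 < μ) (hK : 1 ≤ K) (hc : c = μ * (K + 1) / 2)
    (hvi : 0 ≤ b + (c * Vk - c * Vp - c * W))
    (hgb : a ≤ G * d)
    (hW : 1 / 2 * d ^ 2 ≤ W)
    (h7 : μ * (U + Vk) ≤ a - b) :
    K * μ * U + μ * (K + 1) * K / 2 * Vp
      ≤ K / (K + 1) * G ^ 2 / μ + μ * K * (K - 1) / 2 * Vk := by
  have hcpos : 0 < c := by rw [hc]; nlinarith
  have hcW : c * (1 / 2 * d ^ 2) ≤ c * W := mul_le_mul_of_nonneg_left hW hcpos.le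
  have hcd : μ * (U + Vk) ≤ G * d + c * Vk - c * Vp - c * (1 / 2 * d ^ 2) := by linarith
  have e1 : G * d - c * (1 / 2 * d ^ 2) ≤ G ^ 2 / (2 * c) := by
    rw [le_div_iff₀ (by positivity)]
    nlinarith [sq_nonneg (G - c * d)]
  have main_c : μ * U + μ * Vk + c * Vp ≤ G ^ 2 / (2 * c) + c * Vk := by linarith
  have hK0 : (0 : ℝ) ≤ K := by linarith
  have hmm := mul_le_mul_of_nonneg_left main_c hK0
  have heq : K * (G ^ 2 / (2 * c) + c * Vk)
      = K / (K + 1) * G ^ 2 / μ + μ * K * (K + 1) / 2 * Vk := by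
    rw [hc]; field_simp
  rw [heq, hc] at hmm
  ring_nf at hmm ⊢
  linarith [hmm]

theorem mirror_descent_exact_dist
    {E : Type*} [NormedAddCommGroup E] [NormedSpace ℝ E] [FiniteDimensional ℝ E]
    (Q : Set E) (hQcomp : IsCompact Q) (hQconv : Convex ℝ Q)
    (ψ : E → ℝ) (ψ' : E → E →L[ℝ] ℝ)
    (hψdiff : ∀ x ∈ Q, HasFDerivWithinAt ψ (ψ' x) Q x)
    (hψsc : ∀ x ∈ Q, ∀ y ∈ Q, ψ y + ψ' y (x - y) + 1 / 2 * ‖x - y‖ ^ 2 ≤ ψ x)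
    (f : E → ℝ) (μ : ℝ) (hμ : 0 < μ)
    (hf : ∀ x ∈ Q, ∀ gx : E →L[ℝ] ℝ, (∀ y ∈ Q, f x + gx (y - x) ≤ f y) →
      ∀ y ∈ Q, f x + gx (y - x) + μ * breg ψ ψ' y x ≤ f y)
    (hsubex : ∀ z ∈ Q, ∃ gz : E →L[ℝ] ℝ, ∀ y ∈ Q, f z + gz (y - z) ≤ f y)
    (N : ℕ) (hN : 1 ≤ N)
    (x : ℕ → E) (g : ℕ → E →L[ℝ] ℝ) (γ : ℕ → ℝ)
    (hx1 : x 1 ∈ Q)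
    (hγ : ∀ k : ℕ, γ k = 2 / (μ * ((k : ℝ) + 1)))
    (hg : ∀ k ∈ Finset.Icc 1 N, ∀ y ∈ Q, f (x k) + g k (y - x k) ≤ f y)
    (hstep : ∀ k ∈ Finset.Icc 1 N, x (k + 1) ∈ Q ∧
      ∀ y ∈ Q, g k (x (k + 1)) + 1 / γ k * breg ψ ψ' (x (k + 1)) (x k)
        ≤ g k y + 1 / γ k * breg ψ ψ' y (x k))
    (xs : E) (hxsQ : xs ∈ Q) (hxs : ∀ y ∈ Q, f xs ≤ f y)
    (xhat : E)
    (hxhat : xhat = (2 / ((N : ℝ) * ((N : ℝ) + 1))) • ∑ k ∈ Finset.Icc 1 N, (k : ℝ) • x k)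
 :
    ‖xhat - xs‖ ≤ 2 / (μ * Real.sqrt ((N : ℝ) * ((N : ℝ) + 1))) *
      Real.sqrt (∑ k ∈ Finset.Icc 1 N, (k : ℝ) / ((k : ℝ) + 1) * ‖g k‖ ^ 2) := by
  have hxQ : ∀ k, 1 ≤ k → k ≤ N + 1 → x k ∈ Q := by
    intro k
    induction k with
    | zero => intro h; omega
    | succ n _ =>
      intro _ h2
      by_cases hn : n = 0
      · subst hn; exact hx1
      · exact (hstep n (Finset.mem_Icc.mpr ⟨by omega, by omega⟩)).1
  have hbreg_lb : ∀ a ∈ Q, ∀ b ∈ Q, 1 / 2 * ‖a - b‖ ^ 2 ≤ breg ψ ψ' a b := by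
    intro a ha b hb
    have := hψsc a ha b hb
    simp only [breg]; linarith
  have hbreg_nn : ∀ a ∈ Q, ∀ b ∈ Q, 0 ≤ breg ψ ψ' a b := by
    intro a ha b hb
    have h1 := hbreg_lb a ha b hb
    have h2 := sq_nonneg ‖a - b‖
    linarith
  have hfxs : ∀ y ∈ Q, f xs + μ * breg ψ ψ' y xs ≤ f y := by
    intro y hy
    have h0 : ∀ y ∈ Q, f xs + (0 : E →L[ℝ] ℝ) (y - xs) ≤ f y := by
      intro z hz; simpa using hxs z hz
    have := hf xs hxsQ 0 h0 y hy
    simpa using this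
  set D : ℕ → ℝ := fun j => μ * (j : ℝ) * ((j : ℝ) - 1) / 2 * breg ψ ψ' xs (x j) with hD
  have key : ∀ k ∈ Finset.Icc 1 N,
      (k : ℝ) * μ * breg ψ ψ' (x k) xs + (D (k + 1) - D k)
        ≤ (k : ℝ) / ((k : ℝ) + 1) * ‖g k‖ ^ 2 / μ := by
    intro k hk
    obtain ⟨hk1, hkN⟩ := Finset.mem_Icc.mp hk
    have hxkQ : x k ∈ Q := hxQ k hk1 (by omega)
    have hxpQ : x (k + 1) ∈ Q := (hstep k hk).1
    have hK1 : (1 : ℝ) ≤ (k : ℝ) := by exact_mod_cast hk1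
    have hcval : 1 / γ k = μ * ((k : ℝ) + 1) / 2 := by
      rw [hγ, one_div_div]
    have hmin' : ∀ y ∈ Q, g k (x (k + 1)) + (μ * ((k : ℝ) + 1) / 2) * breg ψ ψ' (x (k + 1)) (x k)
        ≤ g k y + (μ * ((k : ℝ) + 1) / 2) * breg ψ ψ' y (x k) := by
      intro y hy
      have := (hstep k hk).2 y hy
      rwa [hcval] at this
    have hvi := var_ineq Q hQconv ψ ψ' hψdiff (g k) (μ * ((k : ℝ) + 1) / 2)
      (x k) (x (k + 1)) hxpQ hmin' xs hxsQ
    have h3 : (ψ' (x (k + 1))) (xs - x (k + 1)) - (ψ' (x k)) (xs - x (k + 1))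
        = breg ψ ψ' xs (x k) - breg ψ ψ' xs (x (k + 1)) - breg ψ ψ' (x (k + 1)) (x k) := by
      simp only [breg, map_sub]; ring
    rw [h3] at hvi
    have hring : (μ * ((k : ℝ) + 1) / 2) *
        (breg ψ ψ' xs (x k) - breg ψ ψ' xs (x (k + 1)) - breg ψ ψ' (x (k + 1)) (x k))
        = ((μ * ((k : ℝ) + 1) / 2) * breg ψ ψ' xs (x k)
          - (μ * ((k : ℝ) + 1) / 2) * breg ψ ψ' xs (x (k + 1))
          - (μ * ((k : ℝ) + 1) / 2) * breg ψ ψ' (x (k + 1)) (x k)) := by ring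
    have hvi' : 0 ≤ g k (xs - x (k + 1)) +
        ((μ * ((k : ℝ) + 1) / 2) * breg ψ ψ' xs (x k)
          - (μ * ((k : ℝ) + 1) / 2) * breg ψ ψ' xs (x (k + 1))
          - (μ * ((k : ℝ) + 1) / 2) * breg ψ ψ' (x (k + 1)) (x k)) := by
      linarith [hvi, hring]
    have hgb : g k (x k - x (k + 1)) ≤ ‖g k‖ * ‖x (k + 1) - x k‖ := by
      calc g k (x k - x (k + 1)) ≤ ‖g k (x k - x (k + 1))‖ := le_abs_self _
        _ ≤ ‖g k‖ * ‖x k - x (k + 1)‖ := (g k).le_opNorm _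
        _ = ‖g k‖ * ‖x (k + 1) - x k‖ := by rw [norm_sub_rev]
    have hW : 1 / 2 * ‖x (k + 1) - x k‖ ^ 2 ≤ breg ψ ψ' (x (k + 1)) (x k) :=
      hbreg_lb _ hxpQ _ hxkQ
    have hA := hf (x k) hxkQ (g k) (hg k hk) xs hxsQ
    have hB := hfxs (x k) hxkQ
    have hms : g k (x k - x (k + 1)) - g k (xs - x (k + 1)) = -(g k (xs - x k)) := by
      simp only [map_sub]; ring
    have h7 : μ * (breg ψ ψ' (x k) xs + breg ψ ψ' xs (x k))
        ≤ g k (x k - x (k + 1)) - g k (xs - x (k + 1)):= by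
      rw [hms]; linarith
    have hst := step_arith μ (k : ℝ) (μ * ((k : ℝ) + 1) / 2) ‖g k‖ ‖x (k + 1) - x k‖
      (breg ψ ψ' (x k) xs) (breg ψ ψ' xs (x k)) (breg ψ ψ' xs (x (k + 1)))
      (breg ψ ψ' (x (k + 1)) (x k)) (g k (x k - x (k + 1))) (g k (xs - x (k + 1)))
      hμ hK1 rfl hvi' hgb hW h7
    have hDk : D k = μ * (k : ℝ) * ((k : ℝ) - 1) / 2 * breg ψ ψ' xs (x k) := rfl
    have hDk1 : D (k + 1) = μ * ((k : ℝ) + 1) * (k : ℝ) / 2 * breg ψ ψ' xs (x (k + 1)) := by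
      simp only [hD]
      push_cast
      ring
    rw [hDk, hDk1]
    linarith [hst]
  have hsum1 : ∑ k ∈ Finset.Icc 1 N, ((k : ℝ) * μ * breg ψ ψ' (x k) xs + (D (k + 1) - D k))
      ≤ ∑ k ∈ Finset.Icc 1 N, (k : ℝ) / ((k : ℝ) + 1) * ‖g k‖ ^ 2 / μ :=
    Finset.sum_le_sum key
  rw [Finset.sum_add_distrib, tele_sum D N] at hsum1
  have hD1 : D 1 = 0 := by simp [hD]
  have hDN1 : 0 ≤ D (N + 1) := by
    have hbb : 0 ≤ breg ψ ψ' xs (x (N + 1)) :=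
      hbreg_nn xs hxsQ (x (N + 1)) (hxQ (N + 1) (by omega) le_rfl)
    have he : D (N + 1) = μ * ((N : ℝ) + 1) * (N : ℝ) / 2 * breg ψ ψ' xs (x (N + 1)) := by
      simp only [hD]; push_cast; ring
    rw [he]
    exact mul_nonneg (by positivity) hbb
  set S : ℝ := ∑ k ∈ Finset.Icc 1 N, (k : ℝ) / ((k : ℝ) + 1) * ‖g k‖ ^ 2 with hS
  have hS0 : 0 ≤ S := by
    apply Finset.sum_nonneg
    intro k hk
    positivity
  have hsumS : ∑ k ∈ Finset.Icc 1 N, (k : ℝ) / ((k : ℝ) + 1) * ‖g k‖ ^ 2 / μ = S / μ := by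
    rw [hS, Finset.sum_div]
  rw [hsumS] at hsum1
  set T : ℝ := ∑ k ∈ Finset.Icc 1 N, (k : ℝ) * ‖x k - xs‖ ^ 2 with hT
  have hTb : μ / 2 * T ≤ S / μ := by
    have hlow : ∀ k ∈ Finset.Icc 1 N,
        μ / 2 * ((k : ℝ) * ‖x k - xs‖ ^ 2) ≤ (k : ℝ) * μ * breg ψ ψ' (x k) xs := by
      intro k hk
      obtain ⟨hk1, hkN⟩ := Finset.mem_Icc.mp hk
      have hxkQ : x k ∈ Q := hxQ k hk1 (by omega)
      have hb := hbreg_lb (x k) hxkQ xs hxsQ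
      have hK0 : (0 : ℝ) ≤ (k : ℝ) * μ := mul_nonneg (Nat.cast_nonneg k) hμ.le
      have h2 := mul_le_mul_of_nonneg_left hb hK0
      have e : μ / 2 * ((k : ℝ) * ‖x k - xs‖ ^ 2)
          = (k : ℝ) * μ * (1 / 2 * ‖x k - xs‖ ^ 2) := by ring
      rw [e]
      exact h2
    have h1 : μ / 2 * T ≤ ∑ k ∈ Finset.Icc 1 N, (k : ℝ) * μ * breg ψ ψ' (x k) xs := by
      rw [hT, Finset.mul_sum]
      exact Finset.sum_le_sum hlow
    linarith [hsum1, h1, hDN1, hD1.symm.le]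
  have hTS : T ≤ 2 / μ ^ 2 * S := by
    have h1 : (2 / μ) * (μ / 2 * T) ≤ (2 / μ) * (S / μ) :=
      mul_le_mul_of_nonneg_left hTb (by positivity)
    have hμ' : μ ≠ 0 := ne_of_gt hμ
    have e1 : (2 / μ) * (μ / 2 * T) = T := by field_simp
    have e2 : (2 / μ) * (S / μ) = 2 / μ ^ 2 * S := by
      rw [pow_two]; field_simp
    rw [e1, e2] at h1
    exact h1
  set P : ℝ := (N : ℝ) * ((N : ℝ) + 1) with hP
  have hN1 : (1 : ℝ) ≤ (N : ℝ) := by exact_mod_cast hN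
  have hPpos : 0 < P := by rw [hP]; nlinarith
  set c0 : ℝ := 2 / P with hc0
  have hc0pos : 0 < c0 := by positivity
  have hwsum : ∑ k ∈ Finset.Icc 1 N, (c0 * (k : ℝ)) = 1 := by
    rw [← Finset.mul_sum, gauss_sum_real, hc0, hP]
    field_simp
  have hv : xhat - xs = ∑ k ∈ Finset.Icc 1 N, (c0 * (k : ℝ)) • (x k - xs) := by
    have h1 : ∑ k ∈ Finset.Icc 1 N, (c0 * (k : ℝ)) • (x k - xs)
        = (∑ k ∈ Finset.Icc 1 N, (c0 * (k : ℝ)) • x k)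
          - (∑ k ∈ Finset.Icc 1 N, (c0 * (k : ℝ))) • xs := by
      rw [Finset.sum_smul, ← Finset.sum_sub_distrib]
      apply Finset.sum_congr rfl
      intro k _
      rw [smul_sub]
    rw [h1, hwsum, one_smul, hxhat, Finset.smul_sum]
    congr 1
    apply Finset.sum_congr rfl
    intro k _
    rw [smul_smul, hc0, hP]
  have hnorm : ‖xhat - xs‖ ≤ ∑ k ∈ Finset.Icc 1 N, (c0 * (k : ℝ)) * ‖x k - xs‖ := by
    rw [hv]
    refine (norm_sum_le _ _).trans (le_of_eq ?_)
    apply Finset.sum_congr rfl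
    intro k _
    rw [norm_smul, Real.norm_eq_abs, abs_of_nonneg (by positivity)]
  have hcs : (∑ k ∈ Finset.Icc 1 N, (c0 * (k : ℝ)) * ‖x k - xs‖) ^ 2
      ≤ ∑ k ∈ Finset.Icc 1 N, (c0 * (k : ℝ)) * ‖x k - xs‖ ^ 2 := by
    have hcs0 := Finset.sum_mul_sq_le_sq_mul_sq (Finset.Icc 1 N)
      (fun k => Real.sqrt (c0 * (k : ℝ))) (fun k => Real.sqrt (c0 * (k : ℝ)) * ‖x k - xs‖)
    have e2 : ∀ k ∈ Finset.Icc 1 N,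
        Real.sqrt (c0 * (k : ℝ)) * (Real.sqrt (c0 * (k : ℝ)) * ‖x k - xs‖)
          = (c0 * (k : ℝ)) * ‖x k - xs‖ := by
      intro k _
      rw [← mul_assoc, Real.mul_self_sqrt (by positivity)]
    have e3 : ∀ k ∈ Finset.Icc 1 N,
        (Real.sqrt (c0 * (k : ℝ))) ^ 2 = c0 * (k : ℝ) := by
      intro k _
      exact Real.sq_sqrt (by positivity)
    have e4 : ∀ k ∈ Finset.Icc 1 N,
        (Real.sqrt (c0 * (k : ℝ)) * ‖x k - xs‖) ^ 2 = (c0 * (k : ℝ)) * ‖x k - xs‖ ^ 2 := by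
      intro k _
      rw [mul_pow, Real.sq_sqrt (by positivity)]
    rw [Finset.sum_congr rfl e2, Finset.sum_congr rfl e3, Finset.sum_congr rfl e4, hwsum,
      one_mul] at hcs0
    exact hcs0
  have hsum2 : ∑ k ∈ Finset.Icc 1 N, (c0 * (k : ℝ)) * ‖x k - xs‖ ^ 2 = c0 * T := by
    rw [hT, Finset.mul_sum]
    apply Finset.sum_congr rfl
    intro k _
    ring
  have hsq : ‖xhat - xs‖ ^ 2 ≤ 4 / (μ ^ 2 * P) * S := by
    have h1 : ‖xhat - xs‖ ^ 2 ≤ (∑ k ∈ Finset.Icc 1 N, (c0 * (k : ℝ)) * ‖x k - xs‖) ^ 2 :=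
      pow_le_pow_left₀ (norm_nonneg _) hnorm 2
    have h2 : c0 * T ≤ c0 * (2 / μ ^ 2 * S) := mul_le_mul_of_nonneg_left hTS hc0pos.le
    have h3 : c0 * (2 / μ ^ 2 * S) = 4 / (μ ^ 2 * P) * S := by
      rw [hc0]
      field_simp
      ring
    calc ‖xhat - xs‖ ^ 2
        ≤ (∑ k ∈ Finset.Icc 1 N, (c0 * (k : ℝ)) * ‖x k - xs‖) ^ 2 := h1
      _ ≤ ∑ k ∈ Finset.Icc 1 N, (c0 * (k : ℝ)) * ‖x k - xs‖ ^ 2 := hcs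
      _ = c0 * T := hsum2
      _ ≤ c0 * (2 / μ ^ 2 * S) := h2
      _ = 4 / (μ ^ 2 * P) * S := h3
  have hR2 : (2 / (μ * Real.sqrt P) * Real.sqrt S) ^ 2 = 4 / (μ ^ 2 * P) * S := by
    rw [mul_pow, div_pow, mul_pow, Real.sq_sqrt hPpos.le, Real.sq_sqrt hS0]
    norm_num
  have hR0 : 0 ≤ 2 / (μ * Real.sqrt P) * Real.sqrt S :=
    mul_nonneg (div_nonneg (by norm_num) (mul_nonneg hμ.le (Real.sqrt_nonneg _)))
      (Real.sqrt_nonneg _)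
  calc ‖xhat - xs‖ = Real.sqrt (‖xhat - xs‖ ^ 2) := (Real.sqrt_sq (norm_nonneg _)).symm
    _ ≤ Real.sqrt ((2 / (μ * Real.sqrt P) * Real.sqrt S) ^ 2) := by
        apply Real.sqrt_le_sqrt
        rw [hR2]; exact hsq
    _ = 2 / (μ * Real.sqrt P) * Real.sqrt S := Real.sqrt_sq hR0
end

section
/- Let x_1 ∈ Q and for k = 1, …, N let x_{k+1} be a minimizer over Q of x ↦ ⟨g_k, x⟩ + (1/γ_k) V_ψ(x, x_k), where g_k is a subgradient of f at x_k, γ_k = 2/(μ(k+1)), and assume ‖g_k‖_* ≤ M_f for all k. Let x* be a minimizer of f over Q and set x̂ = (2/(N(N+1))) Σ_{k=1}^N k·x_k. Then ‖x̂ − x*‖ ≤ 2 M_f / (μ √(N+1)). -/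
open Finset Real

lemma md_first_order {E : Type*} [NormedAddCommGroup E] [NormedSpace ℝ E]
    {Q : Set E} (hQconv : Convex ℝ Q) {φ : E → ℝ} {D : E →L[ℝ] ℝ} {z : E}
    (hz : z ∈ Q) (hmin : ∀ y ∈ Q, φ z ≤ φ y)
    (hd : HasFDerivWithinAt φ D Q z) {y : E} (hy : y ∈ Q) : 0 ≤ D (y - z) := by
  have hmin' : IsLocalMinOn φ Q z :=
    eventually_nhdsWithin_of_forall (fun w hw => hmin w hw)
  exact hmin'.hasFDerivWithinAt_nonneg hd
    (sub_mem_posTangentConeAt_of_segment_subset (hQconv.segment_subset hz hy))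

lemma md_step {E : Type*} [NormedAddCommGroup E] [NormedSpace ℝ E]
    {Q : Set E} (hQconv : Convex ℝ Q)
    (ψ : E → ℝ) (ψ' : E → E →L[ℝ] ℝ)
    (hψdiff : ∀ x ∈ Q, HasFDerivWithinAt ψ (ψ' x) Q x)
    {xk z : E} (hz : z ∈ Q) (gk : E →L[ℝ] ℝ) (c : ℝ)
    (hmin : ∀ y ∈ Q, gk z + c * breg ψ ψ' z xk ≤ gk y + c * breg ψ ψ' y xk)
    {y : E} (hy : y ∈ Q) :
    gk (z - y) ≤ c * (breg ψ ψ' y xk - breg ψ ψ' y z - breg ψ ψ' z xk) := by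
  have h2 : HasFDerivWithinAt (fun w : E => (ψ' xk) (w - xk)) (ψ' xk) Q z := by
    have heq : (fun w : E => (ψ' xk) (w - xk)) = fun w => ψ' xk w - ψ' xk xk := by
      funext w; simp [map_sub]
    rw [heq]
    exact ((ψ' xk).hasFDerivAt.hasFDerivWithinAt).sub_const _
  have hD : HasFDerivWithinAt (fun w => gk w + c * breg ψ ψ' w xk)
      (gk + c • (ψ' z - ψ' xk)) Q z := by
    have h1 : HasFDerivWithinAt (fun w => breg ψ ψ' w xk) (ψ' z - ψ' xk) Q z := by
      simp only [breg]
      exact ((hψdiff z hz).sub_const (ψ xk)).sub h2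
    exact (gk.hasFDerivAt.hasFDerivWithinAt).add (h1.const_mul c)
  have hopt := md_first_order hQconv hz hmin hD hy
  simp only [ContinuousLinearMap.add_apply, ContinuousLinearMap.smul_apply,
    ContinuousLinearMap.sub_apply, smul_eq_mul, map_sub, breg] at hopt ⊢
  nlinarith [hopt]

lemma md_telescope (a : ℕ → ℝ) (N : ℕ) :
    ∑ k ∈ Finset.Icc 1 N, (a k - a (k+1)) = a 1 - a (N+1) := by
  induction N with
  | zero => simp
  | succ n ih =>
    rcases Nat.eq_zero_or_pos n with h | h
    · subst h; simp
    · rw [Finset.sum_Icc_succ_top (by omega), ih]; ring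

lemma md_gauss (N : ℕ) : ∑ k ∈ Finset.Icc 1 N, (k:ℝ) = (N:ℝ) * ((N:ℝ)+1) / 2 := by
  induction N with
  | zero => simp
  | succ n ih =>
    rw [Finset.sum_Icc_succ_top (by omega), ih]
    push_cast; ring

set_option maxHeartbeats 1000000 in
theorem mirror_descent_lipschitz_dist
    {E : Type*} [NormedAddCommGroup E] [NormedSpace ℝ E] [FiniteDimensional ℝ E]
    (Q : Set E) (hQcomp : IsCompact Q) (hQconv : Convex ℝ Q)
    (ψ : E → ℝ) (ψ' : E → E →L[ℝ] ℝ)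
    (hψdiff : ∀ x ∈ Q, HasFDerivWithinAt ψ (ψ' x) Q x)
    (hψsc : ∀ x ∈ Q, ∀ y ∈ Q, ψ y + ψ' y (x - y) + 1 / 2 * ‖x - y‖ ^ 2 ≤ ψ x)
    (f : E → ℝ) (μ : ℝ) (hμ : 0 < μ)
    (hf : ∀ x ∈ Q, ∀ gx : E →L[ℝ] ℝ, (∀ y ∈ Q, f x + gx (y - x) ≤ f y) →
      ∀ y ∈ Q, f x + gx (y - x) + μ * breg ψ ψ' y x ≤ f y)
    (hsubex : ∀ z ∈ Q, ∃ gz : E →L[ℝ] ℝ, ∀ y ∈ Q, f z + gz (y - z) ≤ f y)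
    (N : ℕ) (hN : 1 ≤ N)
    (x : ℕ → E) (g : ℕ → E →L[ℝ] ℝ) (γ : ℕ → ℝ)
    (hx1 : x 1 ∈ Q)
    (hγ : ∀ k : ℕ, γ k = 2 / (μ * ((k : ℝ) + 1)))
    (hg : ∀ k ∈ Finset.Icc 1 N, ∀ y ∈ Q, f (x k) + g k (y - x k) ≤ f y)
    (hstep : ∀ k ∈ Finset.Icc 1 N, x (k + 1) ∈ Q ∧
      ∀ y ∈ Q, g k (x (k + 1)) + 1 / γ k * breg ψ ψ' (x (k + 1)) (x k)
        ≤ g k y + 1 / γ k * breg ψ ψ' y (x k))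
    (xs : E) (hxsQ : xs ∈ Q) (hxs : ∀ y ∈ Q, f xs ≤ f y)
    (xhat : E)
    (hxhat : xhat = (2 / ((N : ℝ) * ((N : ℝ) + 1))) • ∑ k ∈ Finset.Icc 1 N, (k : ℝ) • x k)
    (M : ℝ) (hM : ∀ k ∈ Finset.Icc 1 N, ‖g k‖ ≤ M)
 :
    ‖xhat - xs‖ ≤ 2 * M / (μ * Real.sqrt ((N : ℝ) + 1)) := by
  -- membership of iterates
  have hxkQ : ∀ k : ℕ, 1 ≤ k → k ≤ N + 1 → x k ∈ Q := by
    intro k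
    induction k with
    | zero => intro h; omega
    | succ n ih =>
      intro _ hle
      rcases Nat.eq_zero_or_pos n with h0 | h1
      · subst h0; exact hx1
      · exact (hstep n (Finset.mem_Icc.2 ⟨h1, by omega⟩)).1
  -- Bregman lower bound
  have hbreg : ∀ u ∈ Q, ∀ v ∈ Q, 1/2 * ‖u - v‖^2 ≤ breg ψ ψ' u v := by
    intro u hu v hv
    have := hψsc u hu v hv
    simp only [breg]; linarith
  have hbreg0 : ∀ u ∈ Q, ∀ v ∈ Q, 0 ≤ breg ψ ψ' u v := by
    intro u hu v hv
    have := hbreg u hu v hv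
    nlinarith [sq_nonneg ‖u - v‖]
  have hM0 : 0 ≤ M := le_trans (norm_nonneg _) (hM 1 (Finset.mem_Icc.2 ⟨le_refl _, hN⟩))
  set V : ℕ → ℝ := fun k => breg ψ ψ' xs (x k) with hV
  set a : ℕ → ℝ := fun j => μ/2 * (j:ℝ) * ((j:ℝ) - 1) * V j with ha
  -- per-step inequality
  have key : ∀ k ∈ Finset.Icc 1 N, (k:ℝ) * (f (x k) - f xs) ≤ M^2/μ + (a k - a (k+1)) := by
    intro k hk
    obtain ⟨hk1, hkN⟩ := Finset.mem_Icc.1 hk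
    have hkQ : x k ∈ Q := hxkQ k hk1 (by omega)
    have hzQ : x (k+1) ∈ Q := (hstep k hk).1
    have hγpos : 0 < γ k := by
      rw [hγ k]
      positivity
    have hc : 1 / γ k = μ * ((k:ℝ)+1) / 2 := by
      rw [hγ k]
      field_simp
    -- step lemma
    have hstep' := md_step hQconv ψ ψ' hψdiff hzQ (g k) (1/γ k) (hstep k hk).2 hxsQ
    -- Cauchy-Schwarz + AM-GM
    have hcs : g k (x k - x (k+1)) ≤ M * ‖x k - x (k+1)‖ := by
      calc g k (x k - x (k+1)) ≤ ‖g k (x k - x (k+1))‖ := le_abs_self _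
        _ ≤ ‖g k‖ * ‖x k - x (k+1)‖ := (g k).le_opNorm _
        _ ≤ M * ‖x k - x (k+1)‖ :=
            mul_le_mul_of_nonneg_right (hM k hk) (norm_nonneg _)
    have hγk1 : γ k * (1/γ k) = 1 := by field_simp
    have hamgm : M * ‖x k - x (k+1)‖ ≤ γ k * M^2 / 2 + (1/γ k) * (1/2 * ‖x k - x (k+1)‖^2) := by
      rw [← mul_le_mul_iff_of_pos_left hγpos]
      nlinarith [sq_nonneg (γ k * M - ‖x k - x (k+1)‖), hγk1, hγpos]
    -- strong convexity at x k
    have hsc := hf (x k) hkQ (g k) (hg k hk) xs hxsQ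
    -- assemble
    have hBz : 1/2 * ‖x (k+1) - x k‖^2 ≤ breg ψ ψ' (x (k+1)) (x k) := hbreg _ hzQ _ hkQ
    have hnorm : ‖x k - x (k+1)‖ = ‖x (k+1) - x k‖ := norm_sub_rev _ _
    have hsplit : g k (x k - xs) = g k (x k - x (k+1)) + g k (x (k+1) - xs) := by
      rw [← map_add]
      congr 1
      abel
    have hgs : g k (xs - x k) = -(g k (x k - xs)) := by rw [← map_neg]; congr 1; abel
    -- per-step value bound
    have hval : f (x k) - f xs ≤ γ k * M^2/2 + (1/γ k - μ) * V k - (1/γ k) * V (k+1) := by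
      have h1 : g k (x (k+1) - xs) ≤ (1/γ k) * (V k - V (k+1) - breg ψ ψ' (x (k+1)) (x k)) := by
        simpa [hV] using hstep'
      have hcpos : 0 < 1 / γ k := by positivity
      have h2 : (1/γ k) * (1/2 * ‖x (k+1) - x k‖^2) ≤ (1/γ k) * breg ψ ψ' (x (k+1)) (x k) :=
        mul_le_mul_of_nonneg_left hBz (le_of_lt hcpos)
      have h3 : (1/γ k) * (1/2 * ‖x k - x (k+1)‖^2) = (1/γ k) * (1/2 * ‖x (k+1) - x k‖^2) := by
        rw [hnorm]
      have hsc' : f (x k) - f xs ≤ g k (x k - xs) - μ * V k := by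
        rw [hgs] at hsc
        simp only [hV]
        linarith
      calc f (x k) - f xs ≤ g k (x k - xs) - μ * V k := hsc'
        _ = g k (x k - x (k+1)) + g k (x (k+1) - xs) - μ * V k := by rw [hsplit]
        _ ≤ (γ k * M^2/2 + (1/γ k) * (1/2 * ‖x k - x (k+1)‖^2))
            + (1/γ k) * (V k - V (k+1) - breg ψ ψ' (x (k+1)) (x k)) - μ * V k := by
              linarith [le_trans hcs hamgm, h1]
        _ ≤ γ k * M^2/2 + (1/γ k - μ) * V k - (1/γ k) * V (k+1) := by
              rw [h3]
              nlinarith [h2]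
    -- multiply by k
    have hk1R : (1:ℝ) ≤ (k:ℝ) := by exact_mod_cast hk1
    have hγk : γ k * (1/γ k) = 1 := by field_simp
    have hγval : γ k = 2 / (μ * ((k:ℝ)+1)) := hγ k
    have hkpos : (0:ℝ) < (k:ℝ) + 1 := by linarith
    have hterm1 : (k:ℝ) * (γ k * M^2/2) ≤ M^2/μ := by
      rw [hγval]
      have hid1 : (k:ℝ) * (2/(μ*((k:ℝ)+1)) * M^2/2) = (k:ℝ)/((k:ℝ)+1) * (M^2/μ) := by
        field_simp
      rw [hid1]
      have h1 : (k:ℝ)/((k:ℝ)+1) ≤ 1 := by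
        rw [div_le_one hkpos]; linarith
      calc (k:ℝ)/((k:ℝ)+1) * (M^2/μ) ≤ 1 * (M^2/μ) :=
            mul_le_mul_of_nonneg_right h1 (by positivity)
        _ = M^2/μ := one_mul _
    have hmul := mul_le_mul_of_nonneg_left hval (by linarith : (0:ℝ) ≤ (k:ℝ))
    have hid : (k:ℝ) * (γ k * M^2/2 + (1/γ k - μ) * V k - (1/γ k) * V (k+1))
        = (k:ℝ) * (γ k * M^2/2) + (a k - a (k+1)) := by
      simp only [ha, hc]
      push_cast
      ring
    rw [hid] at hmul
    linarith
  -- sum up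
  have hsum : ∑ k ∈ Finset.Icc 1 N, (k:ℝ) * (f (x k) - f xs) ≤ (N:ℝ) * (M^2/μ) := by
    calc ∑ k ∈ Finset.Icc 1 N, (k:ℝ) * (f (x k) - f xs)
        ≤ ∑ k ∈ Finset.Icc 1 N, (M^2/μ + (a k - a (k+1))) := Finset.sum_le_sum key
      _ = (N:ℝ) * (M^2/μ) + (a 1 - a (N+1)) := by
          rw [Finset.sum_add_distrib, md_telescope, Finset.sum_const, Nat.card_Icc]
          simp
      _ ≤ (N:ℝ) * (M^2/μ) := by
          have ha1 : a 1 = 0 := by simp [ha]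
          have haN : 0 ≤ a (N+1) := by
            have hVN : 0 ≤ V (N+1) := hbreg0 xs hxsQ _ (hxkQ (N+1) (by omega) (le_refl _))
            simp only [ha]
            push_cast
            have he : μ/2 * ((N:ℝ)+1) * ((N:ℝ)+1-1) * V (N+1)
                = (μ/2 * ((N:ℝ)+1) * (N:ℝ)) * V (N+1) := by ring
            rw [he]
            exact mul_nonneg (by positivity) hVN
          linarith
  -- xhat in Q
  have hNpos : (0:ℝ) < (N:ℝ) := by exact_mod_cast hN
  set S : ℝ := (N:ℝ) * ((N:ℝ)+1) / 2 with hS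
  have hSpos : 0 < S := by positivity
  have hgauss : ∑ k ∈ Finset.Icc 1 N, (k:ℝ) = S := md_gauss N
  have hxhat' : xhat = ∑ k ∈ Finset.Icc 1 N, ((2 / ((N:ℝ) * ((N:ℝ)+1)) * (k:ℝ))) • x k := by
    rw [hxhat, Finset.smul_sum]
    simp [smul_smul]
  have hxhatQ : xhat ∈ Q := by
    rw [hxhat']
    apply hQconv.sum_mem
    · intro k hk; positivity
    · rw [← Finset.mul_sum, hgauss, hS]
      field_simp
    · intro k hk
      obtain ⟨h1, h2⟩ := Finset.mem_Icc.1 hk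
      exact hxkQ k h1 (by omega)
  -- sum of k • x k equals S • xhat
  have hsumx : ∑ k ∈ Finset.Icc 1 N, (k:ℝ) • x k = S • xhat := by
    rw [hxhat, smul_smul, hS]
    have : (N:ℝ) * ((N:ℝ)+1) / 2 * (2 / ((N:ℝ) * ((N:ℝ)+1))) = 1 := by
      field_simp
    rw [this, one_smul]
  -- Jensen via subgradient at xhat
  obtain ⟨gh, hgh⟩ := hsubex xhat hxhatQ
  have hjensen : S * f xhat ≤ ∑ k ∈ Finset.Icc 1 N, (k:ℝ) * f (x k) := by
    have hlin : ∑ k ∈ Finset.Icc 1 N, (k:ℝ) * gh (x k - xhat) = 0 := by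
      have h1 : ∑ k ∈ Finset.Icc 1 N, (k:ℝ) * gh (x k - xhat)
          = gh (∑ k ∈ Finset.Icc 1 N, (k:ℝ) • (x k - xhat)) := by
        rw [map_sum]
        apply Finset.sum_congr rfl
        intro k _
        rw [map_smul]
        simp
      have h2 : ∑ k ∈ Finset.Icc 1 N, (k:ℝ) • (x k - xhat) = 0 := by
        have : ∑ k ∈ Finset.Icc 1 N, (k:ℝ) • (x k - xhat)
            = (∑ k ∈ Finset.Icc 1 N, (k:ℝ) • x k) - (∑ k ∈ Finset.Icc 1 N, (k:ℝ)) • xhat := by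
          rw [Finset.sum_smul, ← Finset.sum_sub_distrib]
          apply Finset.sum_congr rfl
          intro k _
          rw [smul_sub]
        rw [this, hsumx, hgauss]
        simp
      rw [h1, h2, map_zero]
    have hper : ∀ k ∈ Finset.Icc 1 N, (k:ℝ) * (f xhat + gh (x k - xhat)) ≤ (k:ℝ) * f (x k) := by
      intro k hk
      obtain ⟨h1, h2⟩ := Finset.mem_Icc.1 hk
      exact mul_le_mul_of_nonneg_left (hgh (x k) (hxkQ k h1 (by omega))) (Nat.cast_nonneg k)
    have := Finset.sum_le_sum hper
    have hexp : ∑ k ∈ Finset.Icc 1 N, (k:ℝ) * (f xhat + gh (x k - xhat))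
        = S * f xhat + ∑ k ∈ Finset.Icc 1 N, (k:ℝ) * gh (x k - xhat) := by
      rw [← hgauss, Finset.sum_mul]
      rw [← Finset.sum_add_distrib]
      apply Finset.sum_congr rfl
      intro k _
      ring
    rw [hexp, hlin, add_zero] at this
    exact this
  -- f xhat - f xs bound
  have hfk : f xhat - f xs ≤ 2 * M^2 / (μ * ((N:ℝ)+1)) := by
    have h1 : S * (f xhat - f xs) ≤ (N:ℝ) * (M^2/μ) := by
      have h2 : ∑ k ∈ Finset.Icc 1 N, (k:ℝ) * (f (x k) - f xs)
          = (∑ k ∈ Finset.Icc 1 N, (k:ℝ) * f (x k)) - S * f xs := by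
        rw [← hgauss, Finset.sum_mul, ← Finset.sum_sub_distrib]
        apply Finset.sum_congr rfl
        intro k _
        ring
      rw [h2] at hsum
      nlinarith [hjensen]
    rw [hS] at h1
    have h2 := mul_le_mul_of_nonneg_left h1 hμ.le
    have h3 : μ * ((N:ℝ) * (M^2/μ)) = (N:ℝ) * M^2 := by field_simp
    rw [h3] at h2
    rw [le_div_iff₀ (by positivity)]
    nlinarith [h2, hNpos]
  -- strong convexity of f at xs with zero subgradient
  have hzero : ∀ y ∈ Q, f xs + (0 : E →L[ℝ] ℝ) (y - xs) ≤ f y := by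
    intro y hy
    simpa using hxs y hy
  have hstrong := hf xs hxsQ 0 hzero xhat hxhatQ
  simp only [ContinuousLinearMap.zero_apply, add_zero] at hstrong
  have hB : 1/2 * ‖xhat - xs‖^2 ≤ breg ψ ψ' xhat xs := hbreg xhat hxhatQ xs hxsQ
  have hsq : ‖xhat - xs‖^2 ≤ 4 * M^2 / (μ^2 * ((N:ℝ)+1)) := by
    have h1 : μ * (1/2 * ‖xhat - xs‖^2) ≤ f xhat - f xs := by
      nlinarith [mul_le_mul_of_nonneg_left hB hμ.le]
    have hfk' : (f xhat - f xs) * (μ * ((N:ℝ)+1)) ≤ 2 * M^2 := by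
      rw [← le_div_iff₀ (by positivity)]
      exact hfk
    rw [le_div_iff₀ (by positivity)]
    nlinarith [mul_le_mul_of_nonneg_left h1 (by positivity : (0:ℝ) ≤ 2*((N:ℝ)+1)), hfk', hμ, hNpos]
  have hR : 0 ≤ 2*M/(μ*Real.sqrt ((N:ℝ)+1)) := by positivity
  have hRsq : (2*M/(μ*Real.sqrt ((N:ℝ)+1)))^2 = 4*M^2/(μ^2*((N:ℝ)+1)) := by
    rw [div_pow, mul_pow, mul_pow, Real.sq_sqrt (by positivity : (0:ℝ) ≤ (N:ℝ)+1)]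
    ring
  have hfin := Real.sqrt_le_sqrt (le_trans hsq (le_of_eq hRsq.symm))
  rwa [Real.sqrt_sq (norm_nonneg _), Real.sqrt_sq hR] at hfin
end

section
/- Let x_k ∈ Q, let g ∈ E* be any dual vector, let γ > 0, and let x_{k+1} be a minimizer over Q of x ↦ ⟨g, x⟩ + (1/γ) V_ψ(x, x_k). Then for every u ∈ Q: ⟨g, x_k − u⟩ ≤ (γ/2) ‖g‖_*² + (1/γ) ( V_ψ(u, x_k) − V_ψ(u, x_{k+1}) ). -/
open Finset Real

theorem mirror_step_key_inequality
    {E : Type*} [NormedAddCommGroup E] [NormedSpace ℝ E] [FiniteDimensional ℝ E]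
    (Q : Set E) (hQcomp : IsCompact Q) (hQconv : Convex ℝ Q)
    (ψ : E → ℝ) (ψ' : E → E →L[ℝ] ℝ)
    (hψdiff : ∀ x ∈ Q, HasFDerivWithinAt ψ (ψ' x) Q x)
    (hψsc : ∀ x ∈ Q, ∀ y ∈ Q, ψ y + ψ' y (x - y) + 1 / 2 * ‖x - y‖ ^ 2 ≤ ψ x)
    (xk : E) (hxk : xk ∈ Q) (g : E →L[ℝ] ℝ) (γ : ℝ) (hγ : 0 < γ)
    (xk1 : E) (hxk1 : xk1 ∈ Q)
    (hmin : ∀ y ∈ Q, g xk1 + 1 / γ * breg ψ ψ' xk1 xk ≤ g y + 1 / γ * breg ψ ψ' y xk) :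
    ∀ u ∈ Q, g (xk - u) ≤ γ / 2 * ‖g‖ ^ 2 + 1 / γ * (breg ψ ψ' u xk - breg ψ ψ' u xk1) := by
  intro u hu
  -- derivative of the linear part
  have h2 : HasFDerivWithinAt (fun y : E => (ψ' xk) (y - xk)) (ψ' xk) Q xk1 := by
    have h := ((ψ' xk).hasFDerivAt (x := xk1)).hasFDerivWithinAt (s := Q)
    simpa [map_sub, sub_eq_add_neg] using h.sub_const ((ψ' xk) xk)
  have hbreg : HasFDerivWithinAt (fun y => breg ψ ψ' y xk) (ψ' xk1 - ψ' xk) Q xk1 := by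
    exact ((hψdiff xk1 hxk1).sub_const (ψ xk)).sub h2
  have hGd : HasFDerivWithinAt (fun y => g y + 1 / γ * breg ψ ψ' y xk)
      (g + (1 / γ) • (ψ' xk1 - ψ' xk)) Q xk1 := by
    have := (g.hasFDerivAt (x := xk1)).hasFDerivWithinAt (s := Q)
    exact this.add (hbreg.const_smul (1 / γ))
  have hloc : IsLocalMinOn (fun y => g y + 1 / γ * breg ψ ψ' y xk) Q xk1 :=
    (isMinOn_iff.mpr fun y hy => hmin y hy).localize
  have hcone : u - xk1 ∈ posTangentConeAt Q xk1 :=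
    sub_mem_posTangentConeAt_of_segment_subset (hQconv.segment_subset hxk1 hu)
  have hopt : 0 ≤ (g + (1 / γ) • (ψ' xk1 - ψ' xk)) (u - xk1) :=
    hloc.hasFDerivWithinAt_nonneg hGd hcone
  have hopt' : 0 ≤ g u - g xk1 +
      1 / γ * ((ψ' xk1) u - (ψ' xk1) xk1 - ((ψ' xk) u - (ψ' xk) xk1)) := by
    simp only [ContinuousLinearMap.add_apply, ContinuousLinearMap.smul_apply,
      ContinuousLinearMap.sub_apply, map_sub, smul_eq_mul] at hopt
    linarith [hopt]
  have hsc : ψ xk + (ψ' xk) (xk1 - xk) + 1 / 2 * ‖xk1 - xk‖ ^ 2 ≤ ψ xk1 :=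
    hψsc xk1 hxk1 xk hxk
  have hg1 : g (xk - xk1) ≤ ‖g‖ * ‖xk - xk1‖ :=
    (le_abs_self _).trans (by simpa [Real.norm_eq_abs] using g.le_opNorm (xk - xk1))
  have hnorm : ‖xk1 - xk‖ = ‖xk - xk1‖ := norm_sub_rev _ _
  have hγ' : γ * (1 / γ) = 1 := mul_one_div_cancel hγ.ne'
  have key : γ * g (xk - u) ≤ γ ^ 2 / 2 * ‖g‖ ^ 2 +
      (breg ψ ψ' u xk - breg ψ ψ' u xk1) := by
    have hopt2 : 0 ≤ γ * (g u - g xk1) +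
        ((ψ' xk1) u - (ψ' xk1) xk1 - ((ψ' xk) u - (ψ' xk) xk1)) := by
      have h := mul_le_mul_of_nonneg_left hopt' hγ.le
      rw [mul_zero] at h
      calc (0 : ℝ) ≤ γ * (g u - g xk1 +
            1 / γ * ((ψ' xk1) u - (ψ' xk1) xk1 - ((ψ' xk) u - (ψ' xk) xk1))) := h
        _ = γ * (g u - g xk1) + γ * (1 / γ) *
            ((ψ' xk1) u - (ψ' xk1) xk1 - ((ψ' xk) u - (ψ' xk) xk1)) := by ring
        _ = _ := by rw [hγ']; ring
    rw [hnorm] at hsc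
    simp only [breg, map_sub] at hopt2 hsc ⊢
    simp only [map_sub] at hg1
    nlinarith [sq_nonneg (γ * ‖g‖ - ‖xk - xk1‖), hγ, hnorm,
      mul_le_mul_of_nonneg_left hg1 hγ.le]
  have h1γ : 0 ≤ 1 / γ := by positivity
  calc g (xk - u) = 1 / γ * (γ * g (xk - u)) := by field_simp
    _ ≤ 1 / γ * (γ ^ 2 / 2 * ‖g‖ ^ 2 + (breg ψ ψ' u xk - breg ψ ψ' u xk1)) :=
        mul_le_mul_of_nonneg_left key h1γ
    _ = γ / 2 * ‖g‖ ^ 2 + 1 / γ * (breg ψ ψ' u xk - breg ψ ψ' u xk1) := by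
        field_simp
end

section
/- Let f : Q → ℝ be relatively μ-strongly convex with respect to ψ (μ > 0), let x* minimize f over Q, let x_k ∈ Q, let g_k be a subgradient of f at x_k, and let g̃_k ∈ E* satisfy ‖g̃_k − g_k‖_* ≤ A for some A ≥ 0. Let γ_k > 0 with 1/γ_k ≥ μ/2, and let x_{k+1} minimize x ↦ ⟨g̃_k, x⟩ + (1/γ_k) V_ψ(x, x_k) over Q. Then f(x_k) − f(x*) ≤ (γ_k/2) ‖g̃_k‖_*² + (1/γ_k − μ/2) V_ψ(x*, x_k) − (1/γ_k) V_ψ(x*, x_{k+1}) + A²/μ. -/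
/-!
Relative strong convexity at `xk`, tested against `xs`, bounds `f xk - f xs` by
`gk (xk - xs) - μ V(xs, xk)`. Split `gk = g̃k + (gk - g̃k)` and `xk - xs = (xk - xk1) + (xk1 - xs)`.
The optimality condition of the prox step together with the three-point identity gives
`g̃k (xk1 - xs) ≤ (V(xs, xk) - V(xs, xk1) - V(xk1, xk)) / γk`. The remaining two pairings are
absorbed by Young's inequality, using `‖x - y‖² / 2 ≤ V(x, y)`: the term `g̃k (xk - xk1)` costs
`γk ‖g̃k‖² / 2` and eats `V(xk1, xk) / γk`, while the error `(gk - g̃k) (xk - xs)` costs `A² / μ`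
and eats half of `μ V(xs, xk)`.
-/

open Finset Real

section Bregman

variable {E : Type*} [NormedAddCommGroup E] [NormedSpace ℝ E] (ψ : E → ℝ) (ψ' : E → E →L[ℝ] ℝ)

theorem breg_three_point (x y z : E) :
    ψ' y (x - y) - ψ' z (x - y) = breg ψ ψ' x z - breg ψ ψ' x y - breg ψ ψ' y z := by
  have hxy : x - y = (x - z) - (y - z) := by abel
  simp only [breg, hxy, map_sub]
  ring

theorem half_sq_norm_sub_le_breg {x y : E}
    (h : ψ y + ψ' y (x - y) + 1 / 2 * ‖x - y‖ ^ 2 ≤ ψ x) :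
    1 / 2 * ‖x - y‖ ^ 2 ≤ breg ψ ψ' x y := by
  unfold breg
  linarith

theorem hasFDerivWithinAt_breg_left {Q : Set E} {x : E} (hψ : HasFDerivWithinAt ψ (ψ' x) Q x)
    (z : E) : HasFDerivWithinAt (fun y => breg ψ ψ' y z) (ψ' x - ψ' z) Q x := by
  have hlin : HasFDerivWithinAt (fun y => ψ' z (y - z)) (ψ' z) Q x := by
    simpa only [map_sub] using (ψ' z).hasFDerivWithinAt.sub_const (ψ' z z)
  exact (hψ.sub_const (ψ z)).sub hlin

theorem breg_prox_le {Q : Set E} (hQ : Convex ℝ Q) (g : E →L[ℝ] ℝ) (c : ℝ) {z xp x : E}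
    (hxp : xp ∈ Q) (hx : x ∈ Q) (hψ : HasFDerivWithinAt ψ (ψ' xp) Q xp)
    (hmin : ∀ y ∈ Q, g xp + c * breg ψ ψ' xp z ≤ g y + c * breg ψ ψ' y z) :
    g (xp - x) ≤ c * (breg ψ ψ' x z - breg ψ ψ' x xp - breg ψ ψ' xp z) := by
  have hminOn : IsMinOn (fun y => g y + c * breg ψ ψ' y z) Q xp := hmin
  have hderiv := g.hasFDerivAt.hasFDerivWithinAt.add
    ((hasFDerivWithinAt_breg_left ψ ψ' hψ z).const_mul c)
  have hfoc := hminOn.localize.hasFDerivWithinAt_nonneg hderiv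
    (sub_mem_posTangentConeAt_of_segment_subset (hQ.segment_subset hxp hx))
  simp only [add_apply, smul_apply, sub_apply, smul_eq_mul] at hfoc
  rw [breg_three_point] at hfoc
  have hneg : g (xp - x) = -g (x - xp) := by rw [← map_neg, neg_sub]
  linarith

end Bregman

theorem ContinuousLinearMap.apply_le_sq_div_add_mul {E : Type*} [NormedAddCommGroup E]
    [NormedSpace ℝ E] (ℓ : E →L[ℝ] ℝ) (v : E) {a c B : ℝ} (hc : 0 < c) (hℓ : ‖ℓ‖ ≤ a)
    (hB : 1 / 2 * ‖v‖ ^ 2 ≤ B) : ℓ v ≤ a ^ 2 / (2 * c) + c * B := by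
  have hℓv : ℓ v ≤ a * ‖v‖ := calc
    ℓ v ≤ ‖ℓ‖ * ‖v‖ := (le_abs_self _).trans (ℓ.le_opNorm v)
    _ ≤ a * ‖v‖ := mul_le_mul_of_nonneg_right hℓ (norm_nonneg v)
  have hyoung : a * ‖v‖ ≤ a ^ 2 / (2 * c) + c * (1 / 2 * ‖v‖ ^ 2) := by
    have hsq : a ^ 2 / (2 * c) + c * (1 / 2 * ‖v‖ ^ 2) - a * ‖v‖
        = (a - c * ‖v‖) ^ 2 / (2 * c) := by
      field_simp
      ring
    linarith [div_nonneg (sq_nonneg (a - c * ‖v‖)) (by positivity : (0 : ℝ) ≤ 2 * c)]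
  linarith [mul_le_mul_of_nonneg_left hB hc.le]

theorem inexact_step_inequality_general
    {E : Type*} [NormedAddCommGroup E] [NormedSpace ℝ E]
    (Q : Set E) (hQconv : Convex ℝ Q)
    (ψ : E → ℝ) (ψ' : E → E →L[ℝ] ℝ)
    (hψdiff : ∀ x ∈ Q, HasFDerivWithinAt ψ (ψ' x) Q x)
    (hψsc : ∀ x ∈ Q, ∀ y ∈ Q, ψ y + ψ' y (x - y) + 1 / 2 * ‖x - y‖ ^ 2 ≤ ψ x)
    (f : E → ℝ) (μ : ℝ) (hμ : 0 < μ)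
    (hf : ∀ x ∈ Q, ∀ gx : E →L[ℝ] ℝ, (∀ y ∈ Q, f x + gx (y - x) ≤ f y) →
      ∀ y ∈ Q, f x + gx (y - x) + μ * breg ψ ψ' y x ≤ f y)
    (xs : E) (hxsQ : xs ∈ Q)
    (xk : E) (hxk : xk ∈ Q)
    (gk : E →L[ℝ] ℝ) (hgk : ∀ y ∈ Q, f xk + gk (y - xk) ≤ f y)
    (gtk : E →L[ℝ] ℝ) (A : ℝ) (hAg : ‖gtk - gk‖ ≤ A)
    (γk : ℝ) (hγk : 0 < γk)
    (xk1 : E) (hxk1 : xk1 ∈ Q)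
    (hmin : ∀ y ∈ Q, gtk xk1 + 1 / γk * breg ψ ψ' xk1 xk
      ≤ gtk y + 1 / γk * breg ψ ψ' y xk) :
    f xk - f xs ≤ γk / 2 * ‖gtk‖ ^ 2 + (1 / γk - μ / 2) * breg ψ ψ' xs xk
      - 1 / γk * breg ψ ψ' xs xk1 + A ^ 2 / μ := by
  have hrel := hf xk hxk gk hgk xs hxsQ
  have hprox := breg_prox_le ψ ψ' hQconv gtk (1 / γk) hxk1 hxsQ (hψdiff xk1 hxk1) hmin
  have hstep : gtk (xk - xk1) ≤ ‖gtk‖ ^ 2 / (2 * (1 / γk)) + 1 / γk * breg ψ ψ' xk1 xk :=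
    gtk.apply_le_sq_div_add_mul _ (by positivity) le_rfl
      (by rw [norm_sub_rev]; exact half_sq_norm_sub_le_breg ψ ψ' (hψsc xk1 hxk1 xk hxk))
  have herr : (gk - gtk) (xk - xs) ≤ A ^ 2 / (2 * (μ / 2)) + μ / 2 * breg ψ ψ' xs xk :=
    (gk - gtk).apply_le_sq_div_add_mul _ (by positivity) (by rwa [norm_sub_rev])
      (by rw [norm_sub_rev]; exact half_sq_norm_sub_le_breg ψ ψ' (hψsc xs hxsQ xk hxk))
  have hsplit : gk (xs - xk) = -(gtk (xk - xk1) + gtk (xk1 - xs) + (gk - gtk) (xk - xs)) := by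
    simp only [sub_apply, map_sub]
    ring
  have hγ : ‖gtk‖ ^ 2 / (2 * (1 / γk)) = γk / 2 * ‖gtk‖ ^ 2 := by field_simp
  have hμ2 : A ^ 2 / (2 * (μ / 2)) = A ^ 2 / μ := by field_simp
  rw [hsplit] at hrel
  linarith

theorem inexact_step_inequality
    {E : Type*} [NormedAddCommGroup E] [NormedSpace ℝ E] [FiniteDimensional ℝ E]
    (Q : Set E) (hQcomp : IsCompact Q) (hQconv : Convex ℝ Q)
    (ψ : E → ℝ) (ψ' : E → E →L[ℝ] ℝ)
    (hψdiff : ∀ x ∈ Q, HasFDerivWithinAt ψ (ψ' x) Q x)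
    (hψsc : ∀ x ∈ Q, ∀ y ∈ Q, ψ y + ψ' y (x - y) + 1 / 2 * ‖x - y‖ ^ 2 ≤ ψ x)
    (f : E → ℝ) (μ : ℝ) (hμ : 0 < μ)
    (hf : ∀ x ∈ Q, ∀ gx : E →L[ℝ] ℝ, (∀ y ∈ Q, f x + gx (y - x) ≤ f y) →
      ∀ y ∈ Q, f x + gx (y - x) + μ * breg ψ ψ' y x ≤ f y)
    (xs : E) (hxsQ : xs ∈ Q) (hxs : ∀ y ∈ Q, f xs ≤ f y)
    (xk : E) (hxk : xk ∈ Q)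
    (gk : E →L[ℝ] ℝ) (hgk : ∀ y ∈ Q, f xk + gk (y - xk) ≤ f y)
    (gtk : E →L[ℝ] ℝ) (A : ℝ) (hA : 0 ≤ A) (hAg : ‖gtk - gk‖ ≤ A)
    (γk : ℝ) (hγk : 0 < γk) (hγμ : μ / 2 ≤ 1 / γk)
    (xk1 : E) (hxk1 : xk1 ∈ Q)
    (hmin : ∀ y ∈ Q, gtk xk1 + 1 / γk * breg ψ ψ' xk1 xk
      ≤ gtk y + 1 / γk * breg ψ ψ' y xk) :
    f xk - f xs ≤ γk / 2 * ‖gtk‖ ^ 2 + (1 / γk - μ / 2) * breg ψ ψ' xs xk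
      - 1 / γk * breg ψ ψ' xs xk1 + A ^ 2 / μ :=
  inexact_step_inequality_general Q hQconv ψ ψ' hψdiff hψsc f μ hμ hf xs hxsQ xk hxk gk hgk gtk A
    hAg γk hγk xk1 hxk1 hmin
end

section
/- Let x_1 ∈ Q and for k = 1, …, N let x_{k+1} be a minimizer over Q of x ↦ ⟨g̃_k, x⟩ + (1/γ_k) V_ψ(x, x_k), where γ_k = 4/(μ(k+1)), g_k is a subgradient of f at x_k, and g̃_k satisfies ‖g̃_k − g_k‖_* ≤ Δ with Δ ≥ 0. Let x* be a minimizer of f over Q and set x̂ = (2/(N(N+1))) Σ_{k=1}^N k·x_k. Then ‖x̂ − x*‖ ≤ (2√2/(μ √(N(N+1)))) √(Σ_{k=1}^N (Δ + ‖g_k‖_*)²) + √2 Δ/μ. -/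
open Finset Real

lemma breg_three_point_s11 {E : Type*} [NormedAddCommGroup E] [NormedSpace ℝ E]
    (ψ : E → ℝ) (ψ' : E → E →L[ℝ] ℝ) (u z a : E) :
    breg ψ ψ' u a - breg ψ ψ' u z - breg ψ ψ' z a
      = ψ' z (u - z) - ψ' a (u - z) := by
  simp only [breg, map_sub]
  ring

-- variational inequality from minimality
lemma opt_vi {E : Type*} [NormedAddCommGroup E] [NormedSpace ℝ E]
    {Q : Set E} (hQconv : Convex ℝ Q) {ψ : E → ℝ} {ψ' : E → E →L[ℝ] ℝ}
    {z a : E} (hz : z ∈ Q) (hψz : HasFDerivWithinAt ψ (ψ' z) Q z)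
    (G : E →L[ℝ] ℝ) {c : ℝ} (hc : 0 < c)
    (hmin : ∀ y ∈ Q, G z + c * breg ψ ψ' z a ≤ G y + c * breg ψ ψ' y a)
    {u : E} (hu : u ∈ Q) :
    0 ≤ G (u - z) + c * (ψ' z (u - z) - ψ' a (u - z)) := by
  set F : E → ℝ := fun y => G y + c * (ψ y - ψ a - ψ' a (y - a)) with hF
  have hd : HasFDerivWithinAt F (G + c • (ψ' z - ψ' a)) Q z := by
    have h1 : HasFDerivWithinAt (fun y : E => G y) G Q z :=
      (G.hasFDerivAt).hasFDerivWithinAt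
    have h2 : HasFDerivWithinAt (fun y : E => ψ' a (y - a)) (ψ' a) Q z := by
      have : HasFDerivWithinAt (fun y : E => ψ' a y - ψ' a a) (ψ' a) Q z :=
        ((ψ' a).hasFDerivAt.hasFDerivWithinAt).sub_const _
      simpa [map_sub] using this
    have h3 : HasFDerivWithinAt (fun y : E => ψ y - ψ a - ψ' a (y - a)) (ψ' z - ψ' a) Q z :=
      (hψz.sub_const _).sub h2
    exact h1.add (h3.const_smul c)
  have hmin' : IsLocalMinOn F Q z := by
    apply IsMinOn.localize
    intro y hy
    have := hmin y hy
    simpa [F, breg] using this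
  have hcone : u - z ∈ posTangentConeAt Q z :=
    sub_mem_posTangentConeAt_of_segment_subset (hQconv.segment_subset hz hu)
  have := hmin'.hasFDerivWithinAt_nonneg hd hcone
  simpa [smul_eq_mul, mul_sub] using this

lemma strong_min {E : Type*} [NormedAddCommGroup E] [NormedSpace ℝ E]
    {Q : Set E} (hQconv : Convex ℝ Q)
    {ψ : E → ℝ} {ψ' : E → E →L[ℝ] ℝ}
    (hψsc : ∀ x ∈ Q, ∀ y ∈ Q, ψ y + ψ' y (x - y) + 1 / 2 * ‖x - y‖ ^ 2 ≤ ψ x)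
    {f : E → ℝ} {μ : ℝ} (hμ : 0 < μ)
    (hf : ∀ x ∈ Q, ∀ gx : E →L[ℝ] ℝ, (∀ y ∈ Q, f x + gx (y - x) ≤ f y) →
      ∀ y ∈ Q, f x + gx (y - x) + μ * breg ψ ψ' y x ≤ f y)
    (hsubex : ∀ z ∈ Q, ∃ gz : E →L[ℝ] ℝ, ∀ y ∈ Q, f z + gz (y - z) ≤ f y)
    {xs : E} (hxsQ : xs ∈ Q) (hxs : ∀ y ∈ Q, f xs ≤ f y)
    {y : E} (hy : y ∈ Q) :
    μ / 2 * ‖y - xs‖ ^ 2 ≤ f y - f xs := by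
  have hbreg : ∀ a ∈ Q, ∀ b ∈ Q, 1 / 2 * ‖a - b‖ ^ 2 ≤ breg ψ ψ' a b := by
    intro a ha b hb
    have := hψsc a ha b hb
    simp only [breg]; linarith
  set s : ℝ := ‖y - xs‖ with hs
  -- suffices for all t in (0,1)
  have hstep : ∀ t : ℝ, t ∈ Set.Ioo (0:ℝ) 1 →
      μ * (1 - t) / 2 * s ^ 2 ≤ f y - f xs := by
    rintro t ⟨ht0, ht1⟩
    set zt : E := xs + t • (y - xs) with hzt
    have hztQ : zt ∈ Q := by
      have : zt = (1 - t) • xs + t • y := by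
        rw [hzt]; module
      rw [this]
      exact hQconv hxsQ hy (by linarith) (le_of_lt ht0) (by ring)
    obtain ⟨gz, hgz⟩ := hsubex zt hztQ
    have h1 := hf zt hztQ gz hgz xs hxsQ
    have h2 := hf zt hztQ gz hgz y hy
    have hxe : xs - zt = (-t) • (y - xs) := by rw [hzt]; module
    have hye : y - zt = (1 - t) • (y - xs) := by rw [hzt]; module
    have hg1 : gz (xs - zt) = (-t) * gz (y - xs) := by rw [hxe, map_smul]; rfl
    have hg2 : gz (y - zt) = (1 - t) * gz (y - xs) := by rw [hye, map_smul]; rfl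
    set A : ℝ := gz (y - xs) with hA
    have hB1 : t ^ 2 / 2 * s ^ 2 ≤ breg ψ ψ' xs zt := by
      have := hbreg xs hxsQ zt hztQ
      rw [hxe] at this
      rw [norm_smul] at this
      simp only [norm_neg, Real.norm_eq_abs, abs_of_pos ht0] at this
      calc t ^ 2 / 2 * s ^ 2 = 1 / 2 * (t * s) ^ 2 := by ring
        _ ≤ _ := by rw [← hs] at this; exact this
    have hB2 : (1 - t) ^ 2 / 2 * s ^ 2 ≤ breg ψ ψ' y zt := by
      have := hbreg y hy zt hztQ
      rw [hye, norm_smul] at this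
      simp only [Real.norm_eq_abs, abs_of_pos (by linarith : (0:ℝ) < 1 - t)] at this
      calc (1 - t) ^ 2 / 2 * s ^ 2 = 1 / 2 * ((1 - t) * s) ^ 2 := by ring
        _ ≤ _ := by rw [← hs] at this; exact this
    -- from h1 : f zt + gz (xs - zt) + μ * breg xs zt ≤ f xs
    have hfz : f xs ≤ f zt := hxs zt hztQ
    rw [hg1] at h1
    rw [hg2] at h2
    -- μ * breg xs zt ≤ t * A
    have key1 : μ * (t ^ 2 / 2 * s ^ 2) ≤ t * A := by
      have h4 : μ * breg ψ ψ' xs zt ≤ t * A := by linarith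
      have := mul_le_mul_of_nonneg_left hB1 (le_of_lt hμ)
      linarith
    have hAlb : μ * (t / 2 * s ^ 2) ≤ A := by
      have h5 : t * (μ * (t / 2 * s ^ 2)) ≤ t * A := by
        calc t * (μ * (t / 2 * s ^ 2)) = μ * (t ^ 2 / 2 * s ^ 2) := by ring
          _ ≤ t * A := key1
      exact le_of_mul_le_mul_left h5 ht0
    -- h2 : f zt + (1-t)*A + μ * breg y zt ≤ f y
    have hmb2 := mul_le_mul_of_nonneg_left hB2 (le_of_lt hμ)
    have hfinal : f xs + (1 - t) * (μ * (t / 2 * s ^ 2)) + μ * ((1 - t) ^ 2 / 2 * s ^ 2) ≤ f y := by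
      have : (1 - t) * (μ * (t / 2 * s ^ 2)) ≤ (1 - t) * A :=
        mul_le_mul_of_nonneg_left hAlb (by linarith)
      linarith
    nlinarith [hfinal]
  -- take the limit t → 0+
  rcases eq_or_lt_of_le (norm_nonneg (y - xs)) with h0 | hspos
  · have : s = 0 := h0.symm
    rw [this]
    have := hxs y hy
    simp; nlinarith
  · have hcont : Continuous fun t : ℝ => μ * (1 - t) / 2 * s ^ 2 := by continuity
    have hten : Filter.Tendsto (fun t : ℝ => μ * (1 - t) / 2 * s ^ 2)
        (nhdsWithin 0 (Set.Ioo (0:ℝ) 1)) (nhds (μ * (1 - 0) / 2 * s ^ 2)) :=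
      (hcont.tendsto 0).mono_left nhdsWithin_le_nhds
    have hne : (nhdsWithin (0:ℝ) (Set.Ioo (0:ℝ) 1)).NeBot :=
      left_nhdsWithin_Ioo_neBot one_pos
    have hev : ∀ᶠ t in nhdsWithin (0:ℝ) (Set.Ioo (0:ℝ) 1),
        μ * (1 - t) / 2 * s ^ 2 ≤ f y - f xs :=
      Filter.eventually_of_mem self_mem_nhdsWithin hstep
    have := le_of_tendsto hten hev
    simpa using this

lemma amgm' {γ a b : ℝ} (hγ : 0 < γ) : a * b ≤ γ / 2 * a ^ 2 + 1 / (2 * γ) * b ^ 2 := by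
  rw [← sub_nonneg]
  have h : γ / 2 * a ^ 2 + 1 / (2 * γ) * b ^ 2 - a * b = (γ * a - b) ^ 2 / (2 * γ) := by
    field_simp; ring
  rw [h]; positivity

lemma sum_Icc_cast (N : ℕ) : ∑ k ∈ Finset.Icc 1 N, (k : ℝ) = N * (N + 1) / 2 := by
  induction N with
  | zero => simp
  | succ n ih =>
    rw [Finset.sum_Icc_succ_top (by omega : 1 ≤ n + 1), ih]
    push_cast; ring

lemma telescope_Icc (F : ℕ → ℝ) (N : ℕ) (hN : 1 ≤ N) :
    ∑ k ∈ Finset.Icc 1 N, (F k - F (k + 1)) = F 1 - F (N + 1) := by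
  induction N with
  | zero => omega
  | succ n ih =>
    rcases Nat.eq_zero_or_pos n with hn | hn
    · subst hn; simp
    · rw [Finset.sum_Icc_succ_top (by omega : 1 ≤ n + 1), ih hn]; ring

set_option maxHeartbeats 1000000 in
theorem mirror_descent_absolute_inexact_dist
    {E : Type*} [NormedAddCommGroup E] [NormedSpace ℝ E] [FiniteDimensional ℝ E]
    (Q : Set E) (hQcomp : IsCompact Q) (hQconv : Convex ℝ Q)
    (ψ : E → ℝ) (ψ' : E → E →L[ℝ] ℝ)
    (hψdiff : ∀ x ∈ Q, HasFDerivWithinAt ψ (ψ' x) Q x)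
    (hψsc : ∀ x ∈ Q, ∀ y ∈ Q, ψ y + ψ' y (x - y) + 1 / 2 * ‖x - y‖ ^ 2 ≤ ψ x)
    (f : E → ℝ) (μ : ℝ) (hμ : 0 < μ)
    (hf : ∀ x ∈ Q, ∀ gx : E →L[ℝ] ℝ, (∀ y ∈ Q, f x + gx (y - x) ≤ f y) →
      ∀ y ∈ Q, f x + gx (y - x) + μ * breg ψ ψ' y x ≤ f y)
    (hsubex : ∀ z ∈ Q, ∃ gz : E →L[ℝ] ℝ, ∀ y ∈ Q, f z + gz (y - z) ≤ f y)
    (N : ℕ) (hN : 1 ≤ N)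
    (x : ℕ → E) (g gt : ℕ → E →L[ℝ] ℝ) (γ : ℕ → ℝ)
    (hx1 : x 1 ∈ Q)
    (hγ : ∀ k : ℕ, γ k = 4 / (μ * ((k : ℝ) + 1)))
    (hg : ∀ k ∈ Finset.Icc 1 N, ∀ y ∈ Q, f (x k) + g k (y - x k) ≤ f y)
    (Δ : ℝ) (hΔ : 0 ≤ Δ)
    (habs : ∀ k ∈ Finset.Icc 1 N, ‖gt k - g k‖ ≤ Δ)
    (hstep : ∀ k ∈ Finset.Icc 1 N, x (k + 1) ∈ Q ∧
      ∀ y ∈ Q, gt k (x (k + 1)) + 1 / γ k * breg ψ ψ' (x (k + 1)) (x k)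
        ≤ gt k y + 1 / γ k * breg ψ ψ' y (x k))
    (xs : E) (hxsQ : xs ∈ Q) (hxs : ∀ y ∈ Q, f xs ≤ f y)
    (xhat : E)
    (hxhat : xhat = (2 / ((N : ℝ) * ((N : ℝ) + 1))) • ∑ k ∈ Finset.Icc 1 N, (k : ℝ) • x k)
 :
    ‖xhat - xs‖ ≤ 2 * Real.sqrt 2 / (μ * Real.sqrt ((N : ℝ) * ((N : ℝ) + 1))) *
        Real.sqrt (∑ k ∈ Finset.Icc 1 N, (Δ + ‖g k‖) ^ 2)
      + Real.sqrt 2 * Δ / μ := by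
  -- basic facts
  have hbreg : ∀ a ∈ Q, ∀ b ∈ Q, 1 / 2 * ‖a - b‖ ^ 2 ≤ breg ψ ψ' a b := by
    intro a ha b hb
    have := hψsc a ha b hb
    simp only [breg]; linarith
  have hγpos : ∀ k : ℕ, 0 < γ k := by
    intro k; rw [hγ k]; positivity
  have hxQ : ∀ k : ℕ, 1 ≤ k → k ≤ N + 1 → x k ∈ Q := by
    intro k
    induction k with
    | zero => omega
    | succ n _ =>
      intro _ h2
      rcases Nat.eq_zero_or_pos n with hn | hn
      · subst hn; exact hx1
      · exact (hstep n (Finset.mem_Icc.mpr ⟨hn, by omega⟩)).1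
  have hVnn : ∀ k : ℕ, 1 ≤ k → k ≤ N + 1 → 0 ≤ breg ψ ψ' xs (x k) := by
    intro k h1 h2
    have := hbreg xs hxsQ (x k) (hxQ k h1 h2)
    have h0 : (0:ℝ) ≤ 1 / 2 * ‖xs - x k‖ ^ 2 := by positivity
    linarith
  -- per-step inequality
  have P : ∀ k ∈ Finset.Icc 1 N,
      μ / 2 * breg ψ ψ' xs (x k) + (f (x k) - f xs) ≤
      1 / γ k * breg ψ ψ' xs (x k) - 1 / γ k * breg ψ ψ' xs (x (k + 1))
        + γ k / 2 * ‖gt k‖ ^ 2 + Δ ^ 2 / μ := by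
    intro k hk
    obtain ⟨hk1, hk2⟩ := Finset.mem_Icc.mp hk
    have hγk := hγpos k
    have hxkQ : x k ∈ Q := hxQ k hk1 (by omega)
    have hzQ : x (k + 1) ∈ Q := (hstep k hk).1
    -- (i) strong convexity at x k
    have hi := hf (x k) hxkQ (g k) (hg k hk) xs hxsQ
    have hneg1 : g k (xs - x k) = -(g k (x k - xs)) := by
      rw [← map_neg]; congr 1; abel
    have hi' : μ * breg ψ ψ' xs (x k) + (f (x k) - f xs) ≤ g k (x k - xs) := by
      rw [hneg1] at hi; linarith
    -- (ii) variational inequality + three-point identity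
    have hvi := opt_vi hQconv hzQ (hψdiff _ hzQ) (gt k)
      (one_div_pos.mpr hγk) (hstep k hk).2 hxsQ
    have h3pt := breg_three_point_s11 ψ ψ' xs (x (k + 1)) (x k)
    rw [← h3pt] at hvi
    have hneg2 : gt k (xs - x (k + 1)) = -(gt k (x (k + 1) - xs)) := by
      rw [← map_neg]; congr 1; abel
    rw [hneg2] at hvi
    have hexp : 1 / γ k * (breg ψ ψ' xs (x k) - breg ψ ψ' xs (x (k + 1))
          - breg ψ ψ' (x (k + 1)) (x k))
        = 1 / γ k * breg ψ ψ' xs (x k) - 1 / γ k * breg ψ ψ' xs (x (k + 1))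
          - 1 / γ k * breg ψ ψ' (x (k + 1)) (x k) := by ring
    have hvi2 : gt k (x (k + 1) - xs) ≤
        1 / γ k * breg ψ ψ' xs (x k) - 1 / γ k * breg ψ ψ' xs (x (k + 1))
          - 1 / γ k * breg ψ ψ' (x (k + 1)) (x k) := by linarith
    -- (iii) step term
    have hiii : gt k (x k - x (k + 1)) ≤
        γ k / 2 * ‖gt k‖ ^ 2 + 1 / γ k * breg ψ ψ' (x (k + 1)) (x k) := by
      have h1 : gt k (x k - x (k + 1)) ≤ ‖gt k‖ * ‖x k - x (k + 1)‖ := by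
        calc gt k (x k - x (k + 1)) ≤ |gt k (x k - x (k + 1))| := le_abs_self _
          _ = ‖gt k (x k - x (k + 1))‖ := rfl
          _ ≤ ‖gt k‖ * ‖x k - x (k + 1)‖ := (gt k).le_opNorm _
      have h2 : ‖gt k‖ * ‖x k - x (k + 1)‖ ≤
          γ k / 2 * ‖gt k‖ ^ 2 + 1 / (2 * γ k) * ‖x k - x (k + 1)‖ ^ 2 :=
        amgm' hγk
      have hW2 : ‖x k - x (k + 1)‖ ^ 2 ≤ 2 * breg ψ ψ' (x (k + 1)) (x k) := by
        have := hbreg (x (k + 1)) hzQ (x k) hxkQ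
        rw [norm_sub_rev] at this
        linarith
      have h3 : 1 / (2 * γ k) * ‖x k - x (k + 1)‖ ^ 2 ≤
          1 / (2 * γ k) * (2 * breg ψ ψ' (x (k + 1)) (x k)) :=
        mul_le_mul_of_nonneg_left hW2 (le_of_lt (one_div_pos.mpr (by linarith)))
      have h4 : 1 / (2 * γ k) * (2 * breg ψ ψ' (x (k + 1)) (x k))
          = 1 / γ k * breg ψ ψ' (x (k + 1)) (x k) := by
        have hne : γ k ≠ 0 := hγk.ne'
        field_simp
      linarith
    -- (iv) error term
    have herr : (g k - gt k) (x k - xs) ≤ μ / 2 * breg ψ ψ' xs (x k) + Δ ^ 2 / μ := by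
      have h1 : (g k - gt k) (x k - xs) ≤ ‖g k - gt k‖ * ‖x k - xs‖ := by
        calc (g k - gt k) (x k - xs) ≤ |(g k - gt k) (x k - xs)| := le_abs_self _
          _ = ‖(g k - gt k) (x k - xs)‖ := rfl
          _ ≤ ‖g k - gt k‖ * ‖x k - xs‖ := (g k - gt k).le_opNorm _
      have h2 : ‖g k - gt k‖ ≤ Δ := by rw [norm_sub_rev]; exact habs k hk
      have h3 : ‖g k - gt k‖ * ‖x k - xs‖ ≤ Δ * ‖x k - xs‖ :=
        mul_le_mul_of_nonneg_right h2 (norm_nonneg _)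
      have h4 : ‖x k - xs‖ * Δ ≤ (μ / 2) / 2 * ‖x k - xs‖ ^ 2 + 1 / (2 * (μ / 2)) * Δ ^ 2 :=
        amgm' (by positivity)
      have h5 : 1 / (2 * (μ / 2)) * Δ ^ 2 = Δ ^ 2 / μ := by
        have hne : μ ≠ 0 := hμ.ne'
        field_simp
      have h6 : ‖x k - xs‖ ^ 2 ≤ 2 * breg ψ ψ' xs (x k) := by
        have := hbreg xs hxsQ (x k) hxkQ
        rw [norm_sub_rev] at this
        linarith
      nlinarith [hμ.le]
    -- decomposition
    have hdec : g k (x k - xs) = gt k (x k - x (k + 1)) + gt k (x (k + 1) - xs)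
        + (g k - gt k) (x k - xs) := by
      simp only [ContinuousLinearMap.sub_apply, map_sub]
      ring
    linarith
  -- weighted per-step inequality
  have Q1 : ∀ k ∈ Finset.Icc 1 N,
      (k:ℝ) * (f (x k) - f xs) ≤
      (μ * (k:ℝ) * ((k:ℝ) - 1) / 4 * breg ψ ψ' xs (x k)
        - μ * ((k:ℝ) + 1) * (k:ℝ) / 4 * breg ψ ψ' xs (x (k + 1)))
      + 2 / μ * ‖gt k‖ ^ 2 + (k:ℝ) * (Δ ^ 2 / μ) := by
    intro k hk
    obtain ⟨hk1, hk2⟩ := Finset.mem_Icc.mp hk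
    have hkr : (1:ℝ) ≤ (k:ℝ) := by exact_mod_cast hk1
    have hkr0 : (0:ℝ) ≤ (k:ℝ) := by linarith
    have hmul := mul_le_mul_of_nonneg_left (P k hk) hkr0
    have hinv : 1 / γ k = μ * ((k:ℝ) + 1) / 4 := by rw [hγ k, one_div_div]
    have hγval : γ k = 4 / (μ * ((k:ℝ) + 1)) := hγ k
    rw [hinv, hγval] at hmul
    have hco : (k:ℝ) * (4 / (μ * ((k:ℝ) + 1)) / 2) ≤ 2 / μ := by
      have h1 : (0:ℝ) < μ * ((k:ℝ) + 1) := by positivity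
      rw [show (k:ℝ) * (4 / (μ * ((k:ℝ) + 1)) / 2) = 2 * (k:ℝ) / (μ * ((k:ℝ) + 1)) by ring]
      rw [div_le_div_iff₀ h1 hμ]
      nlinarith
    have hb := mul_le_mul_of_nonneg_right hco (sq_nonneg ‖gt k‖)
    nlinarith [hmul, hb]
  -- summation
  have hG2nn : (0:ℝ) ≤ ∑ k ∈ Finset.Icc 1 N, (Δ + ‖g k‖) ^ 2 :=
    Finset.sum_nonneg fun k _ => sq_nonneg _
  have S : ∑ k ∈ Finset.Icc 1 N, (k:ℝ) * (f (x k) - f xs) ≤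
      2 / μ * (∑ k ∈ Finset.Icc 1 N, (Δ + ‖g k‖) ^ 2)
        + Δ ^ 2 / μ * ((N:ℝ) * ((N:ℝ) + 1) / 2) := by
    have hsum := Finset.sum_le_sum Q1
    have hsplit : ∑ k ∈ Finset.Icc 1 N,
        ((μ * (k:ℝ) * ((k:ℝ) - 1) / 4 * breg ψ ψ' xs (x k)
          - μ * ((k:ℝ) + 1) * (k:ℝ) / 4 * breg ψ ψ' xs (x (k + 1)))
        + 2 / μ * ‖gt k‖ ^ 2 + (k:ℝ) * (Δ ^ 2 / μ))
        = (∑ k ∈ Finset.Icc 1 N,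
            (μ * (k:ℝ) * ((k:ℝ) - 1) / 4 * breg ψ ψ' xs (x k)
              - μ * ((k:ℝ) + 1) * (k:ℝ) / 4 * breg ψ ψ' xs (x (k + 1))))
          + (∑ k ∈ Finset.Icc 1 N, 2 / μ * ‖gt k‖ ^ 2)
          + (∑ k ∈ Finset.Icc 1 N, (k:ℝ) * (Δ ^ 2 / μ)) := by
      rw [← Finset.sum_add_distrib, ← Finset.sum_add_distrib]
    have htel := telescope_Icc
      (fun k : ℕ => μ * (k:ℝ) * ((k:ℝ) - 1) / 4 * breg ψ ψ' xs (x k)) N hN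
    have heq : ∀ k ∈ Finset.Icc 1 N,
        μ * (k:ℝ) * ((k:ℝ) - 1) / 4 * breg ψ ψ' xs (x k)
          - μ * ((k:ℝ) + 1) * (k:ℝ) / 4 * breg ψ ψ' xs (x (k + 1))
        = μ * (k:ℝ) * ((k:ℝ) - 1) / 4 * breg ψ ψ' xs (x k)
          - μ * (((k + 1 : ℕ)):ℝ) * ((((k + 1 : ℕ)):ℝ) - 1) / 4 * breg ψ ψ' xs (x (k + 1)) := by
      intro k _
      push_cast
      ring
    have htel0 : ∑ k ∈ Finset.Icc 1 N,
        (μ * (k:ℝ) * ((k:ℝ) - 1) / 4 * breg ψ ψ' xs (x k)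
          - μ * ((k:ℝ) + 1) * (k:ℝ) / 4 * breg ψ ψ' xs (x (k + 1))) ≤ 0 := by
      rw [Finset.sum_congr rfl heq, htel]
      have h1 : μ * ((1:ℕ):ℝ) * (((1:ℕ):ℝ) - 1) / 4 * breg ψ ψ' xs (x 1) = 0 := by
        norm_num
      have hv := hVnn (N + 1) (by omega) (le_refl _)
      have hc : (0:ℝ) ≤ μ * (((N + 1 : ℕ)):ℝ) * ((((N + 1 : ℕ)):ℝ) - 1) / 4 := by
        push_cast
        have h0 : (0:ℝ) ≤ (N:ℝ) := Nat.cast_nonneg N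
        have : ((N:ℝ) + 1) - 1 = (N:ℝ) := by ring
        rw [this]
        positivity
      have h2 : 0 ≤ μ * (((N + 1 : ℕ)):ℝ) * ((((N + 1 : ℕ)):ℝ) - 1) / 4
          * breg ψ ψ' xs (x (N + 1)) := mul_nonneg hc hv
      linarith
    have hgt : ∀ k ∈ Finset.Icc 1 N, 2 / μ * ‖gt k‖ ^ 2 ≤ 2 / μ * (Δ + ‖g k‖) ^ 2 := by
      intro k hk
      have h1 : ‖gt k‖ ≤ Δ + ‖g k‖ := by
        calc ‖gt k‖ = ‖(gt k - g k) + g k‖ := by rw [sub_add_cancel]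
          _ ≤ ‖gt k - g k‖ + ‖g k‖ := norm_add_le _ _
          _ ≤ Δ + ‖g k‖ := by have := habs k hk; linarith
      have h2 : ‖gt k‖ ^ 2 ≤ (Δ + ‖g k‖) ^ 2 := by nlinarith [norm_nonneg (gt k)]
      exact mul_le_mul_of_nonneg_left h2 (by positivity)
    have hgt2 : ∑ k ∈ Finset.Icc 1 N, 2 / μ * ‖gt k‖ ^ 2 ≤
        2 / μ * (∑ k ∈ Finset.Icc 1 N, (Δ + ‖g k‖) ^ 2) := by
      rw [Finset.mul_sum]
      exact Finset.sum_le_sum hgt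
    have hgauss : ∑ k ∈ Finset.Icc 1 N, (k:ℝ) * (Δ ^ 2 / μ)
        = Δ ^ 2 / μ * ((N:ℝ) * ((N:ℝ) + 1) / 2) := by
      rw [← Finset.sum_mul, sum_Icc_cast]
      ring
    rw [hsplit, hgauss] at hsum
    linarith
  -- Jensen step
  have hN1 : (1:ℝ) ≤ (N:ℝ) := by exact_mod_cast hN
  have hNpos : (0:ℝ) < (N:ℝ) * ((N:ℝ) + 1) := by nlinarith
  set w : ℕ → ℝ := fun k => 2 * (k:ℝ) / ((N:ℝ) * ((N:ℝ) + 1)) with hw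
  have hwnn : ∀ k ∈ Finset.Icc 1 N, 0 ≤ w k := by
    intro k _
    simp only [hw]
    positivity
  have hwsum : ∑ k ∈ Finset.Icc 1 N, w k = 1 := by
    have heq : ∀ k ∈ Finset.Icc 1 N, w k = (k:ℝ) * (2 / ((N:ℝ) * ((N:ℝ) + 1))) := by
      intro k _; simp only [hw]; ring
    rw [Finset.sum_congr rfl heq, ← Finset.sum_mul, sum_Icc_cast]
    field_simp
  have hxhat2 : xhat = ∑ k ∈ Finset.Icc 1 N, w k • x k := by
    rw [hxhat, Finset.smul_sum]
    refine Finset.sum_congr rfl fun k _ => ?_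
    rw [smul_smul]
    congr 1
    simp only [hw]
    ring
  have hxkQ' : ∀ k ∈ Finset.Icc 1 N, x k ∈ Q := by
    intro k hk
    obtain ⟨h1, h2⟩ := Finset.mem_Icc.mp hk
    exact hxQ k h1 (by omega)
  have hxhatQ : xhat ∈ Q := by
    rw [hxhat2]
    exact hQconv.sum_mem hwnn hwsum hxkQ'
  obtain ⟨gh, hgh⟩ := hsubex xhat hxhatQ
  have hjen : f xhat - f xs ≤ ∑ k ∈ Finset.Icc 1 N, w k * (f (x k) - f xs) := by
    have hper : ∀ k ∈ Finset.Icc 1 N,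
        w k * (f xhat + gh (x k - xhat)) ≤ w k * f (x k) := fun k hk =>
      mul_le_mul_of_nonneg_left (hgh (x k) (hxkQ' k hk)) (hwnn k hk)
    have hsum := Finset.sum_le_sum hper
    have hz0 : ∑ k ∈ Finset.Icc 1 N, w k • (x k - xhat) = 0 := by
      simp only [smul_sub]
      rw [Finset.sum_sub_distrib, ← hxhat2, ← Finset.sum_smul, hwsum, one_smul, sub_self]
    have hL : ∑ k ∈ Finset.Icc 1 N, w k * (f xhat + gh (x k - xhat)) = f xhat := by
      have e1 : ∀ k ∈ Finset.Icc 1 N, w k * (f xhat + gh (x k - xhat))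
          = w k * f xhat + gh (w k • (x k - xhat)) := by
        intro k _
        rw [map_smul]
        simp only [smul_eq_mul]
        ring
      rw [Finset.sum_congr rfl e1, Finset.sum_add_distrib, ← Finset.sum_mul, hwsum,
        ← map_sum, hz0, map_zero]
      ring
    have hR : ∑ k ∈ Finset.Icc 1 N, w k * f (x k)
        = (∑ k ∈ Finset.Icc 1 N, w k * (f (x k) - f xs)) + f xs := by
      have e2 : ∀ k ∈ Finset.Icc 1 N, w k * f (x k)
          = w k * (f (x k) - f xs) + w k * f xs := by
        intro k _; ring
      rw [Finset.sum_congr rfl e2, Finset.sum_add_distrib, ← Finset.sum_mul, hwsum]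
      ring
    rw [hL, hR] at hsum
    linarith
  have hwf : ∑ k ∈ Finset.Icc 1 N, w k * (f (x k) - f xs)
      = 2 / ((N:ℝ) * ((N:ℝ) + 1)) * ∑ k ∈ Finset.Icc 1 N, (k:ℝ) * (f (x k) - f xs) := by
    rw [Finset.mul_sum]
    refine Finset.sum_congr rfl fun k _ => ?_
    simp only [hw]
    ring
  have hfd : f xhat - f xs ≤
      4 * (∑ k ∈ Finset.Icc 1 N, (Δ + ‖g k‖) ^ 2) / (μ * ((N:ℝ) * ((N:ℝ) + 1)))
        + Δ ^ 2 / μ := by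
    rw [hwf] at hjen
    have h2 := mul_le_mul_of_nonneg_left S
      (by positivity : (0:ℝ) ≤ 2 / ((N:ℝ) * ((N:ℝ) + 1)))
    have heq : 2 / ((N:ℝ) * ((N:ℝ) + 1)) *
        (2 / μ * (∑ k ∈ Finset.Icc 1 N, (Δ + ‖g k‖) ^ 2)
          + Δ ^ 2 / μ * ((N:ℝ) * ((N:ℝ) + 1) / 2))
        = 4 * (∑ k ∈ Finset.Icc 1 N, (Δ + ‖g k‖) ^ 2) / (μ * ((N:ℝ) * ((N:ℝ) + 1)))
          + Δ ^ 2 / μ := by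
      field_simp
      ring
    rw [heq] at h2
    linarith
  -- strong convexity at minimizer
  have hkey := strong_min hQconv hψsc hμ hf hsubex hxsQ hxs hxhatQ
  have hsq : ‖xhat - xs‖ ^ 2 ≤
      8 * (∑ k ∈ Finset.Icc 1 N, (Δ + ‖g k‖) ^ 2) / (μ ^ 2 * ((N:ℝ) * ((N:ℝ) + 1)))
        + 2 * Δ ^ 2 / μ ^ 2 := by
    have h1 : μ / 2 * ‖xhat - xs‖ ^ 2 ≤
        4 * (∑ k ∈ Finset.Icc 1 N, (Δ + ‖g k‖) ^ 2) / (μ * ((N:ℝ) * ((N:ℝ) + 1)))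
          + Δ ^ 2 / μ := le_trans hkey hfd
    have h2 := mul_le_mul_of_nonneg_left h1 (by positivity : (0:ℝ) ≤ 2 / μ)
    have e1 : 2 / μ * (μ / 2 * ‖xhat - xs‖ ^ 2) = ‖xhat - xs‖ ^ 2 := by
      field_simp
    have e2 : 2 / μ * (4 * (∑ k ∈ Finset.Icc 1 N, (Δ + ‖g k‖) ^ 2)
          / (μ * ((N:ℝ) * ((N:ℝ) + 1))) + Δ ^ 2 / μ)
        = 8 * (∑ k ∈ Finset.Icc 1 N, (Δ + ‖g k‖) ^ 2)
            / (μ ^ 2 * ((N:ℝ) * ((N:ℝ) + 1))) + 2 * Δ ^ 2 / μ ^ 2 := by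
      field_simp
      ring
    rw [e1, e2] at h2
    exact h2
  -- final square root manipulation
  have hT1nn : 0 ≤ 2 * Real.sqrt 2 / (μ * Real.sqrt ((N:ℝ) * ((N:ℝ) + 1))) *
      Real.sqrt (∑ k ∈ Finset.Icc 1 N, (Δ + ‖g k‖) ^ 2) := by positivity
  have hT2nn : 0 ≤ Real.sqrt 2 * Δ / μ := by positivity
  have hT1sq : (2 * Real.sqrt 2 / (μ * Real.sqrt ((N:ℝ) * ((N:ℝ) + 1))) *
        Real.sqrt (∑ k ∈ Finset.Icc 1 N, (Δ + ‖g k‖) ^ 2)) ^ 2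
      = 8 * (∑ k ∈ Finset.Icc 1 N, (Δ + ‖g k‖) ^ 2)
          / (μ ^ 2 * ((N:ℝ) * ((N:ℝ) + 1))) := by
    rw [mul_pow, div_pow, mul_pow, mul_pow,
      Real.sq_sqrt (by norm_num : (0:ℝ) ≤ 2), Real.sq_sqrt hNpos.le, Real.sq_sqrt hG2nn]
    ring
  have hT2sq : (Real.sqrt 2 * Δ / μ) ^ 2 = 2 * Δ ^ 2 / μ ^ 2 := by
    rw [div_pow, mul_pow, Real.sq_sqrt (by norm_num : (0:ℝ) ≤ 2)]
  have hfin : ‖xhat - xs‖ ^ 2 ≤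
      (2 * Real.sqrt 2 / (μ * Real.sqrt ((N:ℝ) * ((N:ℝ) + 1))) *
        Real.sqrt (∑ k ∈ Finset.Icc 1 N, (Δ + ‖g k‖) ^ 2) + Real.sqrt 2 * Δ / μ) ^ 2 := by
    nlinarith [mul_nonneg hT1nn hT2nn]
  calc ‖xhat - xs‖ = Real.sqrt (‖xhat - xs‖ ^ 2) := (Real.sqrt_sq (norm_nonneg _)).symm
    _ ≤ Real.sqrt ((2 * Real.sqrt 2 / (μ * Real.sqrt ((N:ℝ) * ((N:ℝ) + 1))) *
          Real.sqrt (∑ k ∈ Finset.Icc 1 N, (Δ + ‖g k‖) ^ 2) + Real.sqrt 2 * Δ / μ) ^ 2) :=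
        Real.sqrt_le_sqrt hfin
    _ = _ := Real.sqrt_sq (by linarith)
end
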